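/- Let E be a real vector space and W a generating wedge in E (W − W = E) with the (2,2)-Riesz decomposition property: whenever x₁, x₂, y₁, y₂ ∈ W satisfy x₁ + x₂ = y₁ + y₂, there exist z_{ij} ∈ W (i, j ∈ {1,2}) with x_i = z_{i1} + z_{i2} and y_j = z_{1j} + z_{2j}. Let F be a real vector space partially ordered by a cone V such that every nonempty subset of F that is bounded above has a supremum. Then the set L_b(E,F) of order bounded linear maps from E to F, ordered by S ≤ T iff (T − S)(W) ⊆ V, is a Dedekind complete vector lattice; moreover, for every nonempty family (T_i)_{i∈I} in L_b(E,F) that is bounded above and every x ∈ W, (sup_{i∈I} T_i)(x) = sup { ∑_{i∈I} T_i(y_i) : y_i ∈ W for all i, only finitely many y_i nonzero, ∑_{i∈I} y_i = x }. -/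

import Mathlib

/-- A wedge in a real vector space: a nonempty subset closed under addition
and multiplication by nonnegative scalars. -/
def IsWedge {E : Type*} [AddCommGroup E] [Module ℝ E] (W : Set E) : Prop :=
  W.Nonempty ∧ (∀ x ∈ W, ∀ y ∈ W, x + y ∈ W) ∧ ∀ (c : ℝ), 0 ≤ c → ∀ x ∈ W, c • x ∈ W

/-- `u` is a multi-upper bound of the family `(x i, W i)`. -/
def IsMultiUpperBound {E ι : Type*} [AddCommGroup E] [Module ℝ E]
    (x : ι → E) (W : ι → Set E) (u : E) : Prop :=
  ∀ i, u - x i ∈ W i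

/-- `z` is a multi-supremum of the family `(x i, W i)`. -/
def IsMultiSup {E ι : Type*} [AddCommGroup E] [Module ℝ E]
    (x : ι → E) (W : ι → Set E) (z : E) : Prop :=
  IsMultiUpperBound x W z ∧ ∀ u, IsMultiUpperBound x W u → ∀ i, u - z ∈ W i


open scoped Pointwise

/-- `T` is order bounded from the preordered space `(E,W)` to the ordered space `(F,V)`:
every subset of `E` that is order bounded (below and above) is mapped to an
order bounded subset of `F`. -/
def OrderBounded {E F : Type*} [AddCommGroup E] [Module ℝ E] [AddCommGroup F] [Module ℝ F]
    (W : Set E) (V : Set F) (T : E →ₗ[ℝ] F) : Prop :=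
  ∀ A : Set E, (∃ x y : E, ∀ a ∈ A, a - x ∈ W ∧ y - a ∈ W) →
    ∃ w z : F, ∀ a ∈ A, T a - w ∈ V ∧ z - T a ∈ V

/-- The ordering `S ≤ T` iff `(T - S)(W) ⊆ V` on linear maps. -/
def opLE {E F : Type*} [AddCommGroup E] [Module ℝ E] [AddCommGroup F] [Module ℝ F]
    (W : Set E) (V : Set F) (S T : E →ₗ[ℝ] F) : Prop :=
  ∀ x ∈ W, T x - S x ∈ V

/-!
For a nonempty family `T i` whose Riesz–Kantorovich sets are bounded above, the supremum
`g x = sup {∑ T i (y i) : y i ∈ W, ∑ y i = x}` is additive on `W`, because the Riesz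
decomposition property splits every decomposition of `x + x'` into decompositions of `x` and
of `x'`, and it is positively homogeneous. Since `W` is generating, `g` extends to a linear map,
and this map is the supremum of the family. For two order bounded maps `T`, `S` every element of
the set at `v` is `T v + (S - T) b` with `0 ≤ b ≤ v`, which bounds the supremum on order intervals;
for a family bounded above by `U` the supremum is squeezed between some `T i` and `U`.
-/

section Wedge

variable {E : Type*} [AddCommGroup E] [Module ℝ E] {W : Set E}

def IsWedge.toPointedCone (hW : IsWedge W) : PointedCone ℝ E where
  carrier := W
  add_mem' ha hb := hW.2.1 _ ha _ hb
  zero_mem' := by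
    obtain ⟨x, hx⟩ := hW.1
    simpa using hW.2.2 0 le_rfl x hx
  smul_mem' c _ hx := hW.2.2 c c.2 _ hx

theorem IsWedge.zero_mem (hW : IsWedge W) : (0 : E) ∈ W := hW.toPointedCone.zero_mem

theorem IsWedge.add_mem (hW : IsWedge W) {x y : E} (hx : x ∈ W) (hy : y ∈ W) : x + y ∈ W :=
  hW.2.1 x hx y hy

theorem IsWedge.smul_mem (hW : IsWedge W) {c : ℝ} (hc : 0 ≤ c) {x : E} (hx : x ∈ W) :
    c • x ∈ W :=
  hW.2.2 c hc x hx

theorem IsWedge.sum_mem (hW : IsWedge W) {ι : Type*} {s : Finset ι} {f : ι → E}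
    (h : ∀ i ∈ s, f i ∈ W) : ∑ i ∈ s, f i ∈ W :=
  hW.toPointedCone.sum_mem h

theorem IsWedge.single_apply_mem (hW : IsWedge W) {ι : Type*} {j : ι} {e : E} (he : e ∈ W)
    (i : ι) : Finsupp.single j e i ∈ W := by
  classical
  rw [Finsupp.single_apply]
  split_ifs
  exacts [he, hW.zero_mem]

theorem IsWedge.single_add_mem (hW : IsWedge W) {ι : Type*} {j : ι} {e : E} (he : e ∈ W)
    {y : ι →₀ E} (hy : ∀ i, y i ∈ W) (i : ι) : (Finsupp.single j e + y) i ∈ W :=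
  hW.add_mem (hW.single_apply_mem he i) (hy i)

def HasRieszDecomposition (W : Set E) : Prop :=
  ∀ x₁ x₂ y₁ y₂ : E, x₁ ∈ W → x₂ ∈ W → y₁ ∈ W → y₂ ∈ W → x₁ + x₂ = y₁ + y₂ →
    ∃ z₁₁ z₁₂ z₂₁ z₂₂ : E, z₁₁ ∈ W ∧ z₁₂ ∈ W ∧ z₂₁ ∈ W ∧ z₂₂ ∈ W ∧
      x₁ = z₁₁ + z₁₂ ∧ x₂ = z₂₁ + z₂₂ ∧ y₁ = z₁₁ + z₂₁ ∧ y₂ = z₁₂ + z₂₂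

theorem HasRieszDecomposition.exists_finsupp_split (hW : IsWedge W)
    (hRDP : HasRieszDecomposition W) {ι : Type*} [Nonempty ι] (y : ι →₀ E)
    (hy : ∀ i, y i ∈ W) {x x' : E} (hx : x ∈ W) (hx' : x' ∈ W)
    (hsum : (y.sum fun _ v => v) = x + x') :
    ∃ a b : ι →₀ E, a + b = y ∧ (∀ i, a i ∈ W) ∧ (∀ i, b i ∈ W) ∧
      (a.sum fun _ v => v) = x ∧ (b.sum fun _ v => v) = x' := by
  classical
  induction y using Finsupp.induction generalizing x x' with
  | zero =>
    obtain ⟨j⟩ := ‹Nonempty ι›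
    refine ⟨Finsupp.single j x, Finsupp.single j x', ?_, hW.single_apply_mem hx,
      hW.single_apply_mem hx', ?_, ?_⟩
    · rw [← Finsupp.single_add, ← hsum, Finsupp.sum_zero_index, Finsupp.single_zero]
    all_goals exact Finsupp.sum_single_index rfl
  | single_add j e y hj _ ih =>
    rw [Finsupp.notMem_support_iff] at hj
    have he : e ∈ W := by simpa [hj] using hy j
    have hyW : ∀ i, y i ∈ W := fun i => by
      by_cases hij : i = j
      · exact hij ▸ hj ▸ hW.zero_mem
      · simpa [Finsupp.single_apply, Ne.symm hij] using hy i
    rw [Finsupp.sum_add_index' (fun _ => rfl) (fun _ _ _ => rfl),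
      Finsupp.sum_single_index rfl] at hsum
    obtain ⟨z₁₁, z₁₂, z₂₁, z₂₂, h₁₁, h₁₂, h₂₁, h₂₂, rfl, rfl, rfl, hysum⟩ :=
      hRDP x x' e _ hx hx' he (hW.sum_mem fun i _ => hyW i) hsum.symm
    obtain ⟨a, b, rfl, ha, hb, rfl, rfl⟩ := ih hyW h₁₂ h₂₂ hysum
    refine ⟨Finsupp.single j z₁₁ + a, Finsupp.single j z₂₁ + b, ?_,
      hW.single_add_mem h₁₁ ha, hW.single_add_mem h₂₁ hb, ?_, ?_⟩
    · rw [Finsupp.single_add]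
      abel
    all_goals rw [Finsupp.sum_add_index' (fun _ => rfl) (fun _ _ _ => rfl),
      Finsupp.sum_single_index rfl]

end Wedge

section Supremum

variable {F : Type*} [AddCommGroup F] {V : Set F}

def IsUB (V : Set F) (A : Set F) (u : F) : Prop := ∀ a ∈ A, u - a ∈ V

def IsSup (V : Set F) (A : Set F) (z : F) : Prop := IsUB V A z ∧ ∀ u, IsUB V A u → u - z ∈ V

theorem eq_of_sub_mem_of_sub_mem (hcone : V ∩ (-V) = {0}) {a b : F} (hab : a - b ∈ V)
    (hba : b - a ∈ V) : a = b := by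
  have : a - b ∈ V ∩ (-V) := ⟨hab, by rwa [Set.mem_neg, neg_sub]⟩
  rw [hcone] at this
  exact sub_eq_zero.mp this

theorem IsSup.unique (hcone : V ∩ (-V) = {0}) {A : Set F} {z z' : F} (hz : IsSup V A z)
    (hz' : IsSup V A z') : z = z' :=
  eq_of_sub_mem_of_sub_mem hcone (hz'.2 z hz.1) (hz.2 z' hz'.1)

theorem IsSup.add [Module ℝ F] (hV : IsWedge V) {A B : Set F} {a b : F} (ha : IsSup V A a)
    (hb : IsSup V B b) : IsSup V (A + B) (a + b) := by
  refine ⟨?_, fun u hu => ?_⟩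
  · rintro _ ⟨x, hx, y, hy, rfl⟩
    rw [add_sub_add_comm]
    exact hV.add_mem (ha.1 x hx) (hb.1 y hy)
  · have hub : IsUB V A (u - b) := fun x hx => by
      rw [sub_right_comm]
      exact hb.2 (u - x) fun y hy => by rw [sub_sub]; exact hu _ ⟨x, hx, y, hy, rfl⟩
    rw [add_comm, ← sub_sub]
    exact ha.2 _ hub

theorem IsSup.smul [Module ℝ F] (hV : IsWedge V) {A : Set F} {a : F} (ha : IsSup V A a) {c : ℝ}
    (hc : 0 < c) : IsSup V (c • A) (c • a) := by
  refine ⟨?_, fun u hu => ?_⟩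
  · rintro _ ⟨x, hx, rfl⟩
    rw [← smul_sub]
    exact hV.smul_mem hc.le (ha.1 x hx)
  · have hub : IsUB V A (c⁻¹ • u) := fun x hx => by
      simpa [smul_sub, smul_smul, hc.ne'] using
        hV.smul_mem (inv_nonneg.mpr hc.le) (hu _ ⟨x, hx, rfl⟩)
    simpa [smul_sub, smul_smul, hc.ne'] using hV.smul_mem hc.le (ha.2 _ hub)

end Supremum

section RieszKantorovich

variable {E F ι : Type*} [AddCommGroup E] [Module ℝ E] [AddCommGroup F] [Module ℝ F]
  {W : Set E} {V : Set F}

def rieszKantorovichSet (W : Set E) (T : ι → E →ₗ[ℝ] F) (x : E) : Set F :=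
  {f | ∃ y : ι →₀ E, (∀ i, y i ∈ W) ∧ (y.sum fun _ v => v) = x ∧ f = y.sum fun i v => T i v}

theorem apply_mem_rieszKantorovichSet (hW : IsWedge W) (T : ι → E →ₗ[ℝ] F) (i : ι) {x : E}
    (hx : x ∈ W) : T i x ∈ rieszKantorovichSet W T x :=
  ⟨Finsupp.single i x, hW.single_apply_mem hx, Finsupp.sum_single_index rfl,
    (Finsupp.sum_single_index (h := fun i v => T i v) (map_zero (T i))).symm⟩

theorem isUB_rieszKantorovichSet (hV : IsWedge V) {T : ι → E →ₗ[ℝ] F} {U : E →ₗ[ℝ] F}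
    (hU : ∀ i, opLE W V (T i) U) (x : E) : IsUB V (rieszKantorovichSet W T x) (U x) := by
  rintro f ⟨y, hyW, rfl, rfl⟩
  rw [Finsupp.sum, Finsupp.sum, map_sum, ← Finset.sum_sub_distrib]
  exact hV.sum_mem fun i _ => hU i (y i) (hyW i)

theorem rieszKantorovichSet_add (hW : IsWedge W) (hRDP : HasRieszDecomposition W) [Nonempty ι]
    (T : ι → E →ₗ[ℝ] F) {x x' : E} (hx : x ∈ W) (hx' : x' ∈ W) :
    rieszKantorovichSet W T (x + x') =
      rieszKantorovichSet W T x + rieszKantorovichSet W T x' := by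
  ext f
  constructor
  · rintro ⟨y, hyW, hysum, rfl⟩
    obtain ⟨a, b, rfl, ha, hb, rfl, rfl⟩ := hRDP.exists_finsupp_split hW y hyW hx hx' hysum
    exact ⟨_, ⟨a, ha, rfl, rfl⟩, _, ⟨b, hb, rfl, rfl⟩,
      (Finsupp.sum_add_index' (fun i => map_zero (T i)) (fun i => map_add (T i))).symm⟩
  · rintro ⟨_, ⟨a, ha, rfl, rfl⟩, _, ⟨b, hb, rfl, rfl⟩, rfl⟩
    exact ⟨a + b, fun i => hW.add_mem (ha i) (hb i),
      Finsupp.sum_add_index' (fun _ => rfl) (fun _ _ _ => rfl),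
      (Finsupp.sum_add_index' (fun i => map_zero (T i)) (fun i => map_add (T i))).symm⟩

theorem smul_rieszKantorovichSet_subset (hW : IsWedge W) (T : ι → E →ₗ[ℝ] F) {c : ℝ}
    (hc : 0 ≤ c) (x : E) : c • rieszKantorovichSet W T x ⊆ rieszKantorovichSet W T (c • x) := by
  rintro _ ⟨_, ⟨y, hyW, rfl, rfl⟩, rfl⟩
  refine ⟨c • y, fun i => hW.smul_mem hc (hyW i), ?_, ?_⟩
  · rw [Finsupp.sum_smul_index' (fun _ => rfl), Finsupp.sum, Finsupp.sum, Finset.smul_sum]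
  · rw [Finsupp.sum_smul_index' (fun i => map_zero (T i))]
    simp only [Finsupp.sum, Finset.smul_sum, map_smul]

theorem rieszKantorovichSet_smul (hW : IsWedge W) (T : ι → E →ₗ[ℝ] F) {c : ℝ} (hc : 0 < c)
    (x : E) : rieszKantorovichSet W T (c • x) = c • rieszKantorovichSet W T x := by
  refine (smul_rieszKantorovichSet_subset hW T hc.le x).antisymm' ?_
  calc rieszKantorovichSet W T (c • x)
      = c • c⁻¹ • rieszKantorovichSet W T (c • x) := by
        rw [smul_smul, mul_inv_cancel₀ hc.ne', one_smul]
    _ ⊆ c • rieszKantorovichSet W T (c⁻¹ • c • x) :=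
        Set.smul_set_mono (smul_rieszKantorovichSet_subset hW T (inv_nonneg.mpr hc.le) _)
    _ = c • rieszKantorovichSet W T x := by rw [smul_smul, inv_mul_cancel₀ hc.ne', one_smul]

end RieszKantorovich

section Extension

variable {E F : Type*} [AddCommGroup E] [Module ℝ E] [AddCommGroup F] [Module ℝ F] {W : Set E}

theorem exists_linearMap_eqOn_of_generating (hW : IsWedge W) (hgen : W - W = Set.univ)
    (g : E → F) (hadd : ∀ x ∈ W, ∀ y ∈ W, g (x + y) = g x + g y)
    (hsmul : ∀ c : ℝ, 0 < c → ∀ x ∈ W, g (c • x) = c • g x) :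
    ∃ R : E →ₗ[ℝ] F, ∀ x ∈ W, R x = g x := by
  have hg0 : g 0 = 0 := by simpa using hadd 0 hW.zero_mem 0 hW.zero_mem
  replace hsmul : ∀ c : ℝ, 0 ≤ c → ∀ x ∈ W, g (c • x) = c • g x := fun c hc x hx => by
    rcases hc.eq_or_lt with rfl | hc
    · simp [hg0]
    · exact hsmul c hc x hx
  have hdiff : ∀ e : E, ∃ p q : E, p ∈ W ∧ q ∈ W ∧ p - q = e := fun e => by
    obtain ⟨p, hp, q, hq, hpq⟩ := Set.mem_sub.mp (hgen ▸ Set.mem_univ e)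
    exact ⟨p, q, hp, hq, hpq⟩
  choose p q hp hq hpq using hdiff
  set R : E → F := fun e => g (p e) - g (q e)
  have hR : ∀ a ∈ W, ∀ b ∈ W, R (a - b) = g a - g b := fun a ha b hb => by
    have hsum : p (a - b) + b = a + q (a - b) := by
      rw [← sub_eq_sub_iff_add_eq_add, hpq]
    have := congrArg g hsum
    rw [hadd _ (hp _) _ hb, hadd _ ha _ (hq _)] at this
    exact sub_eq_sub_iff_add_eq_add.mpr this
  have hR_add : ∀ e e' : E, R (e + e') = R e + R e' := fun e e' => by
    have : e + e' = (p e + p e') - (q e + q e') := by rw [add_sub_add_comm, hpq, hpq]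
    rw [this, hR _ (hW.add_mem (hp e) (hp e')) _ (hW.add_mem (hq e) (hq e')),
      hadd _ (hp e) _ (hp e'), hadd _ (hq e) _ (hq e')]
    simp only [R]
    abel
  have hR_smul : ∀ (c : ℝ) (e : E), R (c • e) = c • R e := fun c e => by
    rcases le_or_gt 0 c with hc | hc
    · have : c • e = c • p e - c • q e := by rw [← smul_sub, hpq]
      rw [this, hR _ (hW.smul_mem hc (hp e)) _ (hW.smul_mem hc (hq e)), hsmul c hc _ (hp e),
        hsmul c hc _ (hq e), smul_sub]
    · have hc' : 0 ≤ -c := by linarith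
      have : c • e = (-c) • q e - (-c) • p e := by
        rw [← smul_sub, neg_smul, ← smul_neg, neg_sub, hpq]
      rw [this, hR _ (hW.smul_mem hc' (hq e)) _ (hW.smul_mem hc' (hp e)), hsmul _ hc' _ (hp e),
        hsmul _ hc' _ (hq e), ← smul_sub, neg_smul, ← smul_neg, neg_sub]
  refine ⟨IsLinearMap.mk' R ⟨hR_add, hR_smul⟩, fun x hx => ?_⟩
  simpa [hg0] using hR x hx 0 hW.zero_mem

end Extension

section OrderBounded

variable {E F : Type*} [AddCommGroup E] [Module ℝ E] [AddCommGroup F] [Module ℝ F]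
  {W : Set E} {V : Set F}

theorem orderBounded_zero (hV : IsWedge V) : OrderBounded W V (0 : E →ₗ[ℝ] F) :=
  fun _ _ => ⟨0, 0, fun _ _ => by simpa using hV.zero_mem⟩

theorem OrderBounded.add (hV : IsWedge V) {T S : E →ₗ[ℝ] F} (hT : OrderBounded W V T)
    (hS : OrderBounded W V S) : OrderBounded W V (T + S) := by
  intro A hA
  obtain ⟨w₁, z₁, h₁⟩ := hT A hA
  obtain ⟨w₂, z₂, h₂⟩ := hS A hA
  refine ⟨w₁ + w₂, z₁ + z₂, fun a ha => ⟨?_, ?_⟩⟩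
  · rw [LinearMap.add_apply, add_sub_add_comm]
    exact hV.add_mem (h₁ a ha).1 (h₂ a ha).1
  · rw [LinearMap.add_apply, add_sub_add_comm]
    exact hV.add_mem (h₁ a ha).2 (h₂ a ha).2

theorem OrderBounded.smul (hV : IsWedge V) (c : ℝ) {T : E →ₗ[ℝ] F} (hT : OrderBounded W V T) :
    OrderBounded W V (c • T) := by
  intro A hA
  obtain ⟨w, z, h⟩ := hT A hA
  rcases le_or_gt 0 c with hc | hc
  · refine ⟨c • w, c • z, fun a ha => ⟨?_, ?_⟩⟩
    · simpa [smul_sub] using hV.smul_mem hc (h a ha).1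
    · simpa [smul_sub] using hV.smul_mem hc (h a ha).2
  · have hc' : 0 ≤ -c := by linarith
    refine ⟨c • z, c • w, fun a ha => ⟨?_, ?_⟩⟩
    · simpa [smul_sub, neg_add_eq_sub] using hV.smul_mem hc' (h a ha).2
    · simpa [smul_sub, neg_add_eq_sub] using hV.smul_mem hc' (h a ha).1

theorem OrderBounded.sub (hV : IsWedge V) {T S : E →ₗ[ℝ] F} (hT : OrderBounded W V T)
    (hS : OrderBounded W V S) : OrderBounded W V (T - S) := by
  simpa [sub_eq_add_neg] using hT.add hV (hS.smul hV (-1))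

theorem OrderBounded.exists_bounds_Icc {T : E →ₗ[ℝ] F} (hT : OrderBounded W V T) (u : E) :
    ∃ w z : F, ∀ v ∈ W, u - v ∈ W → T v - w ∈ V ∧ z - T v ∈ V := by
  obtain ⟨w, z, h⟩ := hT {v | v ∈ W ∧ u - v ∈ W} ⟨0, u, fun a ha => by simpa using ha⟩
  exact ⟨w, z, fun v hv huv => h v ⟨hv, huv⟩⟩

theorem orderBounded_of_exists_bounds_Icc (hW : IsWedge W) {R : E →ₗ[ℝ] F}
    (h : ∀ u ∈ W, ∃ w z : F, ∀ v ∈ W, u - v ∈ W → R v - w ∈ V ∧ z - R v ∈ V) :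
    OrderBounded W V R := by
  rintro A ⟨x, y, hA⟩
  rcases A.eq_empty_or_nonempty with rfl | ⟨a₀, ha₀⟩
  · exact ⟨0, 0, fun _ h => h.elim⟩
  obtain ⟨w, z, hwz⟩ := h (y - x) (by
    simpa using hW.add_mem (hA a₀ ha₀).2 (hA a₀ ha₀).1)
  refine ⟨R x + w, R x + z, fun a ha => ?_⟩
  obtain ⟨hw, hz⟩ := hwz (a - x) (hA a ha).1 (by simpa using (hA a ha).2)
  rw [map_sub] at hw hz
  constructor
  · rwa [← sub_sub]
  · convert hz using 1
    abel

theorem OrderBounded.of_le_of_le (hW : IsWedge W) (hV : IsWedge V) {P Q R : E →ₗ[ℝ] F}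
    (hP : OrderBounded W V P) (hQ : OrderBounded W V Q) (hPR : opLE W V P R)
    (hRQ : opLE W V R Q) : OrderBounded W V R := by
  refine orderBounded_of_exists_bounds_Icc hW fun u _ => ?_
  obtain ⟨w, _, hw⟩ := hP.exists_bounds_Icc u
  obtain ⟨_, z, hz⟩ := hQ.exists_bounds_Icc u
  refine ⟨w, z, fun v hv huv => ⟨?_, ?_⟩⟩
  · simpa using hV.add_mem (hPR v hv) (hw v hv huv).1
  · simpa using hV.add_mem (hz v hv huv).2 (hRQ v hv)

theorem opLE_antisymm (hgen : W - W = Set.univ) (hcone : V ∩ (-V) = {0}) {T S : E →ₗ[ℝ] F}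
    (hTS : opLE W V T S) (hST : opLE W V S T) : T = S := by
  ext e
  obtain ⟨a, ha, b, hb, rfl⟩ := Set.mem_sub.mp (hgen ▸ Set.mem_univ e)
  rw [map_sub, map_sub, eq_of_sub_mem_of_sub_mem hcone (hST a ha) (hTS a ha),
    eq_of_sub_mem_of_sub_mem hcone (hST b hb) (hTS b hb)]

end OrderBounded

section SupremumOperator

variable {E F ι : Type*} [AddCommGroup E] [Module ℝ E] [AddCommGroup F] [Module ℝ F]
  {W : Set E} {V : Set F}

def IsRieszKantorovichSup (W : Set E) (V : Set F) (T : ι → E →ₗ[ℝ] F) (R : E →ₗ[ℝ] F) :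
    Prop :=
  ∀ x ∈ W, IsSup V (rieszKantorovichSet W T x) (R x)

theorem IsRieszKantorovichSup.le {T : ι → E →ₗ[ℝ] F} {R : E →ₗ[ℝ] F}
    (hR : IsRieszKantorovichSup W V T R) (hW : IsWedge W) (i : ι) : opLE W V (T i) R :=
  fun x hx => (hR x hx).1 _ (apply_mem_rieszKantorovichSet hW T i hx)

theorem IsRieszKantorovichSup.le_of_forall_le {T : ι → E →ₗ[ℝ] F} {R U : E →ₗ[ℝ] F}
    (hR : IsRieszKantorovichSup W V T R) (hV : IsWedge V) (hU : ∀ i, opLE W V (T i) U) :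
    opLE W V R U :=
  fun x hx => (hR x hx).2 _ (isUB_rieszKantorovichSet hV hU x)

theorem exists_isRieszKantorovichSup (hW : IsWedge W) (hgen : W - W = Set.univ)
    (hRDP : HasRieszDecomposition W) (hV : IsWedge V) (hcone : V ∩ (-V) = {0})
    (hDC : ∀ A : Set F, A.Nonempty → (∃ u, IsUB V A u) → ∃ z, IsSup V A z)
    [Nonempty ι] (T : ι → E →ₗ[ℝ] F)
    (hbdd : ∀ x ∈ W, ∃ u, IsUB V (rieszKantorovichSet W T x) u) :
    ∃ R : E →ₗ[ℝ] F, IsRieszKantorovichSup W V T R := by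
  have hsup : ∀ x, ∃ z, x ∈ W → IsSup V (rieszKantorovichSet W T x) z := fun x => by
    by_cases hx : x ∈ W
    · obtain ⟨z, hz⟩ := hDC _
        ⟨_, apply_mem_rieszKantorovichSet hW T (Classical.arbitrary ι) hx⟩ (hbdd x hx)
      exact ⟨z, fun _ => hz⟩
    · exact ⟨0, fun h => absurd h hx⟩
  choose g hg using hsup
  obtain ⟨R, hR⟩ := exists_linearMap_eqOn_of_generating hW hgen g
    (fun x hx y hy => (hg _ (hW.add_mem hx hy)).unique hcone <| by
      rw [rieszKantorovichSet_add hW hRDP T hx hy]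
      exact (hg x hx).add hV (hg y hy))
    (fun c hc x hx => (hg _ (hW.smul_mem hc.le hx)).unique hcone <| by
      rw [rieszKantorovichSet_smul hW T hc]
      exact (hg x hx).smul hV hc)
  exact ⟨R, fun x hx => hR x hx ▸ hg x hx⟩

theorem exists_orderBounded_isRieszKantorovichSup (hW : IsWedge W) (hgen : W - W = Set.univ)
    (hRDP : HasRieszDecomposition W) (hV : IsWedge V) (hcone : V ∩ (-V) = {0})
    (hDC : ∀ A : Set F, A.Nonempty → (∃ u, IsUB V A u) → ∃ z, IsSup V A z)
    [Nonempty ι] {T : ι → E →ₗ[ℝ] F} (hT : ∀ i, OrderBounded W V (T i)) {U : E →ₗ[ℝ] F}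
    (hU : OrderBounded W V U) (hTU : ∀ i, opLE W V (T i) U) :
    ∃ R : E →ₗ[ℝ] F, OrderBounded W V R ∧ IsRieszKantorovichSup W V T R := by
  obtain ⟨R, hR⟩ := exists_isRieszKantorovichSup hW hgen hRDP hV hcone hDC T
    fun x _ => ⟨U x, isUB_rieszKantorovichSet hV hTU x⟩
  let i₀ := Classical.arbitrary ι
  exact ⟨R, (hT i₀).of_le_of_le hW hV hU (hR.le hW i₀) (hR.le_of_forall_le hV hTU), hR⟩

theorem exists_mem_Icc_of_mem_rieszKantorovichSet_pair {T S : E →ₗ[ℝ] F} {v : E} {f : F}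
    (hf : f ∈ rieszKantorovichSet W ![T, S] v) : ∃ b ∈ W, v - b ∈ W ∧ f = T v + (S - T) b := by
  obtain ⟨y, hyW, rfl, rfl⟩ := hf
  have hsum : (y.sum fun _ e => e) = y 0 + y 1 := by
    rw [Finsupp.sum_fintype _ _ fun _ => rfl, Fin.sum_univ_two]
  have hsumT : (y.sum fun i v => ![T, S] i v) = T (y 0) + S (y 1) := by
    rw [Finsupp.sum_fintype _ _ fun i => map_zero _, Fin.sum_univ_two]
    rfl
  rw [hsum, hsumT]
  refine ⟨y 1, hyW 1, by simpa using hyW 0, ?_⟩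
  rw [LinearMap.sub_apply, map_add]
  abel

theorem exists_orderBounded_isRieszKantorovichSup_pair (hW : IsWedge W)
    (hgen : W - W = Set.univ) (hRDP : HasRieszDecomposition W) (hV : IsWedge V)
    (hcone : V ∩ (-V) = {0})
    (hDC : ∀ A : Set F, A.Nonempty → (∃ u, IsUB V A u) → ∃ z, IsSup V A z)
    {T S : E →ₗ[ℝ] F} (hT : OrderBounded W V T) (hS : OrderBounded W V S) :
    ∃ R : E →ₗ[ℝ] F, OrderBounded W V R ∧ IsRieszKantorovichSup W V ![T, S] R := by
  have hub : ∀ u, ∃ z, ∀ v ∈ W, u - v ∈ W → IsUB V (rieszKantorovichSet W ![T, S] v) z := by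
    intro u
    obtain ⟨_, z₁, h₁⟩ := hT.exists_bounds_Icc u
    obtain ⟨_, z₂, h₂⟩ := (hS.sub hV hT).exists_bounds_Icc u
    refine ⟨z₁ + z₂, fun v hv huv f hf => ?_⟩
    obtain ⟨b, hb, hvb, rfl⟩ := exists_mem_Icc_of_mem_rieszKantorovichSet_pair hf
    have hbu : u - b ∈ W := by simpa using hW.add_mem huv hvb
    rw [add_sub_add_comm]
    exact hV.add_mem (h₁ v hv huv).2 (h₂ b hb hbu).2
  obtain ⟨R, hR⟩ := exists_isRieszKantorovichSup hW hgen hRDP hV hcone hDC ![T, S]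
    fun x hx => (hub x).imp fun _ h => h x hx (by simpa using hW.zero_mem)
  refine ⟨R, orderBounded_of_exists_bounds_Icc hW fun u _ => ?_, hR⟩
  obtain ⟨w, _, hw⟩ := hT.exists_bounds_Icc u
  obtain ⟨z, hz⟩ := hub u
  exact ⟨w, z, fun v hv huv =>
    ⟨by simpa using hV.add_mem (hR.le hW 0 v hv) (hw v hv huv).1, (hR v hv).2 z (hz v hv huv)⟩⟩

end SupremumOperator

theorem stmt_16.{u} {E F : Type*} [AddCommGroup E] [Module ℝ E] [AddCommGroup F] [Module ℝ F]
    (W : Set E) (hW : IsWedge W) (hgen : W - W = Set.univ)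
    (hRDP : ∀ x₁ x₂ y₁ y₂ : E, x₁ ∈ W → x₂ ∈ W → y₁ ∈ W → y₂ ∈ W →
      x₁ + x₂ = y₁ + y₂ →
      ∃ z₁₁ z₁₂ z₂₁ z₂₂ : E, z₁₁ ∈ W ∧ z₁₂ ∈ W ∧ z₂₁ ∈ W ∧ z₂₂ ∈ W ∧
        x₁ = z₁₁ + z₁₂ ∧ x₂ = z₂₁ + z₂₂ ∧ y₁ = z₁₁ + z₂₁ ∧ y₂ = z₁₂ + z₂₂)
    (V : Set F) (hV : IsWedge V) (hcone : V ∩ (-V) = {0})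
    (hDC : ∀ A : Set F, A.Nonempty → (∃ u, ∀ a ∈ A, u - a ∈ V) →
      ∃ z, (∀ a ∈ A, z - a ∈ V) ∧ ∀ u, (∀ a ∈ A, u - a ∈ V) → u - z ∈ V) :
    -- `L_b(E,F)` is a linear subspace of `L(E,F)`
    (OrderBounded W V 0 ∧
      (∀ T S : E →ₗ[ℝ] F, OrderBounded W V T → OrderBounded W V S →
        OrderBounded W V (T + S)) ∧
      (∀ (c : ℝ) (T : E →ₗ[ℝ] F), OrderBounded W V T → OrderBounded W V (c • T))) ∧
    -- the order on `L_b(E,F)` is a partial order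
    (∀ T S : E →ₗ[ℝ] F, OrderBounded W V T → OrderBounded W V S →
      opLE W V T S → opLE W V S T → T = S) ∧
    -- `L_b(E,F)` is a lattice: any two elements have a least upper bound
    (∀ T S : E →ₗ[ℝ] F, OrderBounded W V T → OrderBounded W V S →
      ∃ R : E →ₗ[ℝ] F, OrderBounded W V R ∧ opLE W V T R ∧ opLE W V S R ∧
        ∀ U : E →ₗ[ℝ] F, OrderBounded W V U → opLE W V T U → opLE W V S U → opLE W V R U) ∧
    -- `L_b(E,F)` is Dedekind complete
    (∀ 𝒜 : Set (E →ₗ[ℝ] F), (∀ T ∈ 𝒜, OrderBounded W V T) → 𝒜.Nonempty →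
      (∃ U, OrderBounded W V U ∧ ∀ T ∈ 𝒜, opLE W V T U) →
      ∃ R : E →ₗ[ℝ] F, OrderBounded W V R ∧ (∀ T ∈ 𝒜, opLE W V T R) ∧
        ∀ U : E →ₗ[ℝ] F, OrderBounded W V U → (∀ T ∈ 𝒜, opLE W V T U) → opLE W V R U) ∧
    -- the Riesz-Kantorovich formula for the supremum of any nonempty bounded above family
    (∀ (ι : Type u) (T : ι → E →ₗ[ℝ] F), Nonempty ι →
      (∀ i, OrderBounded W V (T i)) →
      (∃ U, OrderBounded W V U ∧ ∀ i, opLE W V (T i) U) →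
      ∀ R : E →ₗ[ℝ] F, OrderBounded W V R → (∀ i, opLE W V (T i) R) →
        (∀ U : E →ₗ[ℝ] F, OrderBounded W V U → (∀ i, opLE W V (T i) U) → opLE W V R U) →
        ∀ x ∈ W,
          (∀ f ∈ {f : F | ∃ y : ι →₀ E, (∀ i, y i ∈ W) ∧ (y.sum fun _ v => v) = x ∧
              f = y.sum fun i v => (T i) v}, R x - f ∈ V) ∧
          (∀ u : F, (∀ f ∈ {f : F | ∃ y : ι →₀ E, (∀ i, y i ∈ W) ∧ (y.sum fun _ v => v) = x ∧
              f = y.sum fun i v => (T i) v}, u - f ∈ V) → u - R x ∈ V)) := by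
  refine ⟨⟨orderBounded_zero hV, fun _ _ hT hS => hT.add hV hS, fun c _ hT => hT.smul hV c⟩,
    fun _ _ _ _ => opLE_antisymm hgen hcone, ?_, ?_, ?_⟩
  · intro T S hT hS
    obtain ⟨R, hRb, hR⟩ :=
      exists_orderBounded_isRieszKantorovichSup_pair hW hgen hRDP hV hcone hDC hT hS
    refine ⟨R, hRb, hR.le hW 0, hR.le hW 1, fun U _ hTU hSU => hR.le_of_forall_le hV ?_⟩
    exact Fin.forall_fin_two.mpr ⟨hTU, hSU⟩
  · rintro 𝒜 h𝒜 ⟨T₀, hT₀⟩ ⟨U, hU, h𝒜U⟩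
    have : Nonempty 𝒜 := ⟨⟨T₀, hT₀⟩⟩
    obtain ⟨R, hRb, hR⟩ := exists_orderBounded_isRieszKantorovichSup hW hgen hRDP hV hcone hDC
      (T := fun T : 𝒜 => T.1) (fun T => h𝒜 T T.2) hU (fun T => h𝒜U T T.2)
    exact ⟨R, hRb, fun T hT => hR.le hW ⟨T, hT⟩,
      fun U' _ hU' => hR.le_of_forall_le hV fun T => hU' T T.2⟩
  · intro ι T _ hT ⟨U, hU, hTU⟩ R hRb hTR hleast x hx
    obtain ⟨R', hR'b, hR'⟩ :=
      exists_orderBounded_isRieszKantorovichSup hW hgen hRDP hV hcone hDC hT hU hTU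
    have hRR' : R = R' :=
      opLE_antisymm hgen hcone (hleast R' hR'b (hR'.le hW)) (hR'.le_of_forall_le hV hTR)
    exact hRR' ▸ hR' x hx
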